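/- arXiv:1304.7366 — 3 statements merged into one kernel-verified Lean document; each statement's English description precedes it below -/
import Mathlib

section
/- Let n ≥ 2, 1 ≤ s ≤ n/2, and α > 0. Then ∫₀¹ ω^{n-s}(1-ω)^s · αn ω^{αn-1} dω ≥ (α/(1+α)) · (s/n)^{2s} · (1 - s/n)^{αn}. -/
/-!
On `(0, 1 - s/n)` the factor `(1 - ω)^s` is at least `(s/n)^s`, and the remaining power of `ω`
integrates explicitly to `(1 - s/n)^(n - s + αn) / (n - s + αn)`. The surplus factor
`(1 - s/n)^(n - s)` dominates `(s/n)^s` because `b^b ≤ (1 - b)^(1 - b)` for `b ≤ 1/2`, and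
`αn / (n - s + αn) ≥ α / (1 + α)`.
-/

open Real MeasureTheory

lemma mul_log_le_one_sub_mul_log_one_sub {b : ℝ} (hb : 0 < b) (hb2 : b ≤ 1 / 2) :
    b * log b ≤ (1 - b) * log (1 - b) := by
  have h1b : 0 < 1 - b := by linarith
  have hlog : 1 - (1 - b)⁻¹ ≤ log (1 - b) := one_sub_inv_le_log_of_pos h1b
  have hlog_div : 1 - ((1 - b) / b)⁻¹ ≤ log (1 - b) - log b := by
    rw [← log_div h1b.ne' hb.ne']
    exact one_sub_inv_le_log_of_pos (div_pos h1b hb)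
  -- `(1 - b) log (1 - b) - b log b = (1 - 2b) log (1 - b) + b log ((1 - b) / b)`,
  -- and the lower bounds `1 - x⁻¹` of the two logarithms cancel in this combination.
  have hcancel : (1 - 2 * b) * (1 - (1 - b)⁻¹) + b * (1 - ((1 - b) / b)⁻¹) = 0 := by
    field_simp
    ring
  nlinarith [mul_le_mul_of_nonneg_left hlog (by linarith : (0:ℝ) ≤ 1 - 2 * b),
    mul_le_mul_of_nonneg_left hlog_div hb.le]

lemma div_rpow_self_le_one_sub_div_rpow {s n : ℝ} (hs : 0 < s) (hsn : s ≤ n / 2) :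
    (s / n) ^ s ≤ (1 - s / n) ^ (n - s) := by
  have hn : 0 < n := by linarith
  have hb : s / n ≤ 1 / 2 := by rw [div_le_iff₀ hn]; linarith
  rw [rpow_def_of_pos (by positivity), rpow_def_of_pos (by linarith), exp_le_exp]
  calc log (s / n) * s = s / n * log (s / n) * n := by field_simp
    _ ≤ (1 - s / n) * log (1 - s / n) * n :=
        mul_le_mul_of_nonneg_right (mul_log_le_one_sub_mul_log_one_sub (by positivity) hb) hn.le
    _ = log (1 - s / n) * (n - s) := by field_simp

lemma div_one_add_le_mul_div_add_mul {α m n : ℝ} (hα : 0 < α) (hm : 0 ≤ m) (hn : 0 < n)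
    (hmn : m ≤ n) : α / (1 + α) ≤ α * n / (m + α * n) := by
  rw [div_le_div_iff₀ (by linarith) (by positivity)]
  nlinarith

lemma le_integral_one_sub_pow_mul_rpow_sub_one (k : ℕ) {q c : ℝ} (hq : 0 < q) (hc0 : 0 ≤ c)
    (hc1 : c ≤ 1) :
    c ^ k * ((1 - c) ^ q / q) ≤ ∫ ω in Set.Ioo (0:ℝ) 1, (1 - ω) ^ k * ω ^ (q - 1) := by
  have hpow : IntegrableOn (fun ω : ℝ => ω ^ (q - 1)) (Set.Ioo 0 1) :=
    (intervalIntegral.integrableOn_Ioo_rpow_iff zero_lt_one).2 (by linarith)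
  have hint : IntegrableOn (fun ω : ℝ => (1 - ω) ^ k * ω ^ (q - 1)) (Set.Ioo 0 1) := by
    refine hpow.mono' (by fun_prop) ?_
    filter_upwards [ae_restrict_mem measurableSet_Ioo] with ω ⟨hω0, hω1⟩
    rw [norm_mul, norm_of_nonneg (rpow_nonneg hω0.le _), norm_pow, norm_of_nonneg (by linarith)]
    exact mul_le_of_le_one_left (rpow_nonneg hω0.le _) (pow_le_one₀ (by linarith) (by linarith))
  have hsub : Set.Ioo 0 (1 - c) ⊆ Set.Ioo (0:ℝ) 1 := Set.Ioo_subset_Ioo_right (by linarith)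
  calc c ^ k * ((1 - c) ^ q / q)
      = ∫ ω in Set.Ioo 0 (1 - c), c ^ k * ω ^ (q - 1) := by
        rw [integral_const_mul, ← integral_Ioc_eq_integral_Ioo,
          ← intervalIntegral.integral_of_le (by linarith), integral_rpow (Or.inl (by linarith)),
          sub_add_cancel, zero_rpow hq.ne', sub_zero]
    _ ≤ ∫ ω in Set.Ioo 0 (1 - c), (1 - ω) ^ k * ω ^ (q - 1) := by
        refine setIntegral_mono_on ((hpow.mono_set hsub).const_mul _) (hint.mono_set hsub)
          measurableSet_Ioo fun ω ⟨hω0, hω1⟩ => ?_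
        gcongr
        linarith
    _ ≤ ∫ ω in Set.Ioo 0 1, (1 - ω) ^ k * ω ^ (q - 1) := by
        refine setIntegral_mono_set hint ?_ hsub.eventuallyLE
        filter_upwards [ae_restrict_mem measurableSet_Ioo] with ω ⟨hω0, hω1⟩
        have : 0 ≤ 1 - ω := by linarith
        positivity

theorem beta_prior_integral_lower_bound_general (n s : ℕ) (α : ℝ) (hs1 : 1 ≤ s)
    (hsn : (s:ℝ) ≤ n / 2) (hα : 0 < α) :
    ∫ ω in Set.Ioo (0:ℝ) 1, ω ^ (n - s) * (1 - ω) ^ s * (α * n * ω ^ (α * n - 1))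
      ≥ (α / (1 + α)) * ((s:ℝ)/n) ^ (2 * s) * (1 - (s:ℝ)/n) ^ (α * n) := by
  have hs0 : (0:ℝ) < s := by exact_mod_cast hs1
  have hn0 : (0:ℝ) < n := by linarith
  have hsn' : s ≤ n := by exact_mod_cast (by linarith : (s:ℝ) ≤ n)
  have h1b : 0 < 1 - (s:ℝ) / n := by rw [sub_pos, div_lt_one hn0]; linarith
  set q : ℝ := (n - s : ℝ) + α * n with hq
  have hq0 : 0 < q := by nlinarith [mul_pos hα hn0]
  have hintegrand : ∀ ω ∈ Set.Ioo (0:ℝ) 1,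
      α * n * ((1 - ω) ^ s * ω ^ (q - 1))
        = ω ^ (n - s) * (1 - ω) ^ s * (α * n * ω ^ (α * n - 1)) := by
    rintro ω ⟨hω0, -⟩
    rw [hq, add_sub_assoc, rpow_add hω0, ← Nat.cast_sub hsn', rpow_natCast]
    ring
  have hpow : ((s:ℝ) / n) ^ s ≤ (1 - (s:ℝ) / n) ^ (n - s : ℝ) := by
    simpa only [rpow_natCast] using div_rpow_self_le_one_sub_div_rpow hs0 hsn
  have hfrac : α / (1 + α) ≤ α * n / q :=
    div_one_add_le_mul_div_add_mul hα (by linarith) hn0 (by linarith)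
  rw [ge_iff_le, ← setIntegral_congr_fun measurableSet_Ioo hintegrand, integral_const_mul]
  calc α / (1 + α) * ((s:ℝ) / n) ^ (2 * s) * (1 - (s:ℝ) / n) ^ (α * n)
      ≤ α * n / q * (((s:ℝ) / n) ^ s *
          ((1 - (s:ℝ) / n) ^ (n - s : ℝ) * (1 - (s:ℝ) / n) ^ (α * n))) := by
        rw [two_mul, pow_add, mul_assoc, mul_assoc]
        gcongr
    _ = α * n * (((s:ℝ) / n) ^ s * ((1 - (s:ℝ) / n) ^ q / q)) := by
        rw [hq, rpow_add h1b]
        ring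
    _ ≤ α * n * ∫ ω in Set.Ioo (0:ℝ) 1, (1 - ω) ^ s * ω ^ (q - 1) := by
        gcongr
        exact le_integral_one_sub_pow_mul_rpow_sub_one s hq0 (by positivity) (by linarith)

theorem beta_prior_integral_lower_bound (n s : ℕ) (α : ℝ) (hn : 2 ≤ n) (hs1 : 1 ≤ s)
    (hsn : (s:ℝ) ≤ n / 2) (hα : 0 < α) :
    ∫ ω in Set.Ioo (0:ℝ) 1, ω ^ (n - s) * (1 - ω) ^ s * (α * n * ω ^ (α * n - 1))
      ≥ (α / (1 + α)) * ((s:ℝ)/n) ^ (2 * s) * (1 - (s:ℝ)/n) ^ (α * n) :=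
  beta_prior_integral_lower_bound_general n s α hs1 hsn hα
end

section
/- Fix β > 1, σ² > 0, and κ ∈ (0,1) with κβ/(β-1) < 1. For any reals θ, θ*, Hölder's inequality with exponents β/(β-1) and β gives: ∫ (p_θ(x)/p_{θ*}(x))^κ · σ^{-1} p_{θ/σ}(x/σ) · p_{θ*}(x) dx ≤ exp(-(κ/2)·((β(1-κ)-1)/(β-1))·(θ-θ*)²) · (2πσ²)^{-1/2} · (σ/(σ²+β)^{1/2} · exp(-(β/(2(σ²+β)))(θ-θ*)²))^{1/β}, where p_μ(x) = (2π)^{-1/2} e^{-(x-μ)²/2}. -/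
open Real MeasureTheory

/-!
The product of the tilted Gaussian `(p_θ / p_θs) ^ κ * p_θs` with the `N(θ, σ2)` density is
again a Gaussian in `x`, so the integral can be computed exactly by completing the square:
it equals `(2πσ2)^{-1/2} √(σ2/(σ2+1)) exp(-(1-κ)(1+κσ2)/(2(σ2+1)) (θ-θs)²)`.
The bound then splits into two elementary comparisons: Bernoulli's inequality for the
normalising constants, and a comparison of the quadratic coefficients, whose difference is a
perfect square.
-/

-- For `a ≤ 0` both sides are junk zeros.
lemma integral_exp_sub_mul_sq (a E m : ℝ) :
    ∫ x : ℝ, exp (E - a * (x - m) ^ 2) = exp E * √(π / a) := by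
  simp_rw [sub_eq_add_neg, exp_add, neg_mul_eq_neg_mul]
  rw [integral_const_mul, integral_add_right_eq_self (fun y => exp (-a * y ^ 2)) (-m),
    integral_gaussian]

lemma mul_exp_div_mul_exp_rpow {c : ℝ} (hc : c ≠ 0) (a b κ : ℝ) :
    (c * exp a / (c * exp b)) ^ κ = exp (κ * (a - b)) := by
  rw [mul_div_mul_left _ _ hc, ← exp_sub, ← exp_mul, mul_comm]

lemma tilted_gaussian_exponent_eq {σ2 : ℝ} (hσ : 0 < σ2) (κ θ θs x : ℝ) :
    κ * (-(x - θ) ^ 2 / 2 - -(x - θs) ^ 2 / 2) + -(x - θ) ^ 2 / (2 * σ2) + -(x - θs) ^ 2 / 2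
      = -((1 - κ) * (1 + κ * σ2) / (2 * (σ2 + 1))) * (θ - θs) ^ 2
        - (σ2 + 1) / (2 * σ2) * (x - (θs + (1 + κ * σ2) / (σ2 + 1) * (θ - θs))) ^ 2 := by
  have : σ2 + 1 ≠ 0 := by positivity
  field_simp
  ring

theorem integral_tilted_gaussian_mul_gaussian {σ2 : ℝ} (hσ : 0 < σ2) (κ θ θs : ℝ) :
    ∫ x : ℝ,
      (((√(2 * π))⁻¹ * exp (-(x - θ) ^ 2 / 2)) / ((√(2 * π))⁻¹ * exp (-(x - θs) ^ 2 / 2))) ^ κ *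
      ((√(2 * π * σ2))⁻¹ * exp (-(x - θ) ^ 2 / (2 * σ2))) *
      ((√(2 * π))⁻¹ * exp (-(x - θs) ^ 2 / 2))
    = (√(2 * π * σ2))⁻¹ * √(σ2 / (σ2 + 1)) *
        exp (-((1 - κ) * (1 + κ * σ2) / (2 * (σ2 + 1))) * (θ - θs) ^ 2) := by
  have h2π : (√(2 * π))⁻¹ ≠ 0 := by positivity
  have hpt : ∀ x : ℝ,
      (((√(2 * π))⁻¹ * exp (-(x - θ) ^ 2 / 2)) / ((√(2 * π))⁻¹ * exp (-(x - θs) ^ 2 / 2))) ^ κ *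
        ((√(2 * π * σ2))⁻¹ * exp (-(x - θ) ^ 2 / (2 * σ2))) *
        ((√(2 * π))⁻¹ * exp (-(x - θs) ^ 2 / 2))
      = (√(2 * π * σ2))⁻¹ * (√(2 * π))⁻¹ *
        exp (-((1 - κ) * (1 + κ * σ2) / (2 * (σ2 + 1))) * (θ - θs) ^ 2
          - (σ2 + 1) / (2 * σ2) * (x - (θs + (1 + κ * σ2) / (σ2 + 1) * (θ - θs))) ^ 2) := by
    intro x
    rw [mul_exp_div_mul_exp_rpow h2π, ← tilted_gaussian_exponent_eq hσ, exp_add, exp_add]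
    ring
  simp_rw [hpt]
  rw [integral_const_mul, integral_exp_sub_mul_sq]
  have hconst : (√(2 * π))⁻¹ * √(π / ((σ2 + 1) / (2 * σ2))) = √(σ2 / (σ2 + 1)) := by
    rw [inv_mul_eq_div, ← sqrt_div (by positivity)]
    congr 1
    field_simp
  rw [← hconst]
  ring

lemma div_add_one_rpow_le {s β : ℝ} (hs : 0 < s) (hβ : 1 ≤ β) :
    (s / (s + 1)) ^ β ≤ s / (s + β) := by
  have hbern : 1 + β * s⁻¹ ≤ (1 + s⁻¹) ^ β :=
    one_add_mul_self_le_rpow_one_add (by linarith [inv_pos.2 hs]) hβ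
  have e1 : s / (s + 1) = (1 + s⁻¹)⁻¹ := by field_simp
  have e2 : s / (s + β) = (1 + β * s⁻¹)⁻¹ := by field_simp
  rw [e1, e2, inv_rpow (by positivity)]
  exact inv_anti₀ (by positivity) hbern

lemma sqrt_div_add_one_le_rpow {s β : ℝ} (hs : 0 < s) (hβ : 1 ≤ β) :
    √(s / (s + 1)) ≤ (√s / √(s + β)) ^ (1 / β) := by
  have hβ0 : β ≠ 0 := by positivity
  calc √(s / (s + 1)) = ((s / (s + 1)) ^ β) ^ (1 / (2 * β)) := by
        rw [sqrt_eq_rpow, ← rpow_mul (by positivity)]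
        field_simp
    _ ≤ (s / (s + β)) ^ (1 / (2 * β)) := by
        gcongr
        exact div_add_one_rpow_le hs hβ
    _ = (√s / √(s + β)) ^ (1 / β) := by
        rw [← sqrt_div hs.le, sqrt_eq_rpow, ← rpow_mul (by positivity)]
        field_simp

-- The difference of the two sides is `(1 + κσ2 - β(1-κ))² / (2(β-1)(σ2+1)(σ2+β))`.
lemma holder_exponent_le_tilted_exponent {β σ2 : ℝ} (hβ : 1 < β) (hσ : 0 ≤ σ2) (κ : ℝ) :
    κ / 2 * ((β * (1 - κ) - 1) / (β - 1)) + 1 / (2 * (σ2 + β))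
      ≤ (1 - κ) * (1 + κ * σ2) / (2 * (σ2 + 1)) := by
  have hβ1 : 0 < β - 1 := by linarith
  have hσβ : 0 < σ2 + β := by linarith
  rw [← sub_nonneg]
  have e : (1 - κ) * (1 + κ * σ2) / (2 * (σ2 + 1))
        - (κ / 2 * ((β * (1 - κ) - 1) / (β - 1)) + 1 / (2 * (σ2 + β)))
      = (1 + κ * σ2 - β * (1 - κ)) ^ 2 / (2 * (β - 1) * (σ2 + 1) * (σ2 + β)) := by
    field_simp
    ring
  rw [e]
  positivity

theorem holder_continuous_part_bound_general (β σ2 κ : ℝ) (hβ : 1 < β) (hσ : 0 < σ2)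
    (θ θs : ℝ) :
    ∫ x : ℝ,
      (((Real.sqrt (2 * Real.pi))⁻¹ * Real.exp (-(x - θ)^2 / 2)) /
        ((Real.sqrt (2 * Real.pi))⁻¹ * Real.exp (-(x - θs)^2 / 2))) ^ κ *
      ((Real.sqrt (2 * Real.pi * σ2))⁻¹ * Real.exp (-(x - θ)^2 / (2 * σ2))) *
      ((Real.sqrt (2 * Real.pi))⁻¹ * Real.exp (-(x - θs)^2 / 2))
    ≤ Real.exp (-(κ/2) * ((β * (1 - κ) - 1) / (β - 1)) * (θ - θs)^2) *
      (Real.sqrt (2 * Real.pi * σ2))⁻¹ *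
      (Real.sqrt σ2 / Real.sqrt (σ2 + β) * Real.exp (-(β / (2 * (σ2 + β))) * (θ - θs)^2)) ^ (1/β) := by
  rw [integral_tilted_gaussian_mul_gaussian hσ, mul_rpow (by positivity) (exp_pos _).le,
    ← exp_mul]
  have hexp : exp (-((1 - κ) * (1 + κ * σ2) / (2 * (σ2 + 1))) * (θ - θs) ^ 2)
      ≤ exp (-(κ / 2) * ((β * (1 - κ) - 1) / (β - 1)) * (θ - θs) ^ 2) *
        exp (-(β / (2 * (σ2 + β))) * (θ - θs) ^ 2 * (1 / β)) := by
    have hβ0 : β ≠ 0 := by positivity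
    have hcoef := mul_le_mul_of_nonneg_right
      (holder_exponent_le_tilted_exponent hβ hσ.le κ) (sq_nonneg (θ - θs))
    rw [← exp_add, exp_le_exp]
    field_simp at hcoef ⊢
    linarith
  calc _ = (√(2 * π * σ2))⁻¹ * (√(σ2 / (σ2 + 1)) *
          exp (-((1 - κ) * (1 + κ * σ2) / (2 * (σ2 + 1))) * (θ - θs) ^ 2)) := by ring
    _ ≤ (√(2 * π * σ2))⁻¹ * ((√σ2 / √(σ2 + β)) ^ (1 / β) *
          (exp (-(κ / 2) * ((β * (1 - κ) - 1) / (β - 1)) * (θ - θs) ^ 2) *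
            exp (-(β / (2 * (σ2 + β))) * (θ - θs) ^ 2 * (1 / β)))) := by
        gcongr
        exact sqrt_div_add_one_le_rpow hσ hβ.le
    _ = _ := by ring

theorem holder_continuous_part_bound (β σ2 κ : ℝ) (hβ : 1 < β) (hσ : 0 < σ2)
    (hκ0 : 0 < κ) (hκ1 : κ < 1) (hfeas : κ * β / (β - 1) < 1) (θ θs : ℝ) :
    ∫ x : ℝ,
      (((Real.sqrt (2 * Real.pi))⁻¹ * Real.exp (-(x - θ)^2 / 2)) /
        ((Real.sqrt (2 * Real.pi))⁻¹ * Real.exp (-(x - θs)^2 / 2))) ^ κ *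
      ((Real.sqrt (2 * Real.pi * σ2))⁻¹ * Real.exp (-(x - θ)^2 / (2 * σ2))) *
      ((Real.sqrt (2 * Real.pi))⁻¹ * Real.exp (-(x - θs)^2 / 2))
    ≤ Real.exp (-(κ/2) * ((β * (1 - κ) - 1) / (β - 1)) * (θ - θs)^2) *
      (Real.sqrt (2 * Real.pi * σ2))⁻¹ *
      (Real.sqrt σ2 / Real.sqrt (σ2 + β) * Real.exp (-(β / (2 * (σ2 + β))) * (θ - θs)^2)) ^ (1/β) :=
  holder_continuous_part_bound_general β σ2 κ hβ hσ θ θs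
end

section
/- Fix β > 1, σ² > 0, κ ∈ (0,1) with κβ/(β-1) < 1, and suppose (κ,σ²) lies in the feasible region R_β, i.e., 1/(σ²(1+β/σ²)^{1/β}) - 1/(σ²+β) < κ((1-κ)β - 1)/(β-1). Then there exists c > 0 such that for all reals θ, θ*: ∫ (p_θ(x)/p_{θ*}(x))^κ · (2πσ²)^{-1/2} e^{-(x-θ)²/(2σ²)} · p_{θ*}(x) dx ≤ e^{-c(θ-θ*)²} · N(θ | θ*, σ²(1+β/σ²)^{1/β}), where p_μ(x) = (2π)^{-1/2}e^{-(x-μ)²/2} and N(θ|m,v) is the normal density with mean m and variance v. -/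
open Real MeasureTheory

/-!
Taking logarithms, the integrand is a constant times `exp (-(a (x - θ)² + b (x - θ*)²) / 2)` with
`a = κ + 1/σ²` and `b = 1 - κ`. Completing the square in `x` and integrating leaves
`N(θ | θ*, σ² + 1) · exp (-A (θ - θ*)² / 2)` with `A = ab/(a + b) = (1 - κ)(1 + κσ²)/(σ² + 1)`.
Bernoulli's inequality gives `v := σ²(1 + β/σ²)^{1/β} ≤ σ² + 1`, so the normalising constant of
variance `σ² + 1` is at most that of variance `v`. Finally `A - 1/(σ² + β) - κ((1 - κ)β - 1)/(β - 1)`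
is a square divided by `(σ² + 1)(σ² + β)(β - 1)`, so feasibility forces `1/v < A`, and
`c = (A - 1/v)/2` works.
-/

theorem mul_sq_add_mul_sq_eq {a b : ℝ} (hab : a + b ≠ 0) (x μ ν : ℝ) :
    a * (x - μ) ^ 2 + b * (x - ν) ^ 2
      = (a + b) * (x - (a * μ + b * ν) / (a + b)) ^ 2 + a * b / (a + b) * (μ - ν) ^ 2 := by
  field_simp
  ring

theorem integral_exp_neg_mul_sq_add_mul_sq {a b : ℝ} (hab : 0 < a + b) (μ ν : ℝ) :
    ∫ x, exp (-(a * (x - μ) ^ 2 + b * (x - ν) ^ 2) / 2)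
      = √(2 * π / (a + b)) * exp (-(a * b / (a + b)) * (μ - ν) ^ 2 / 2) := by
  have hsplit : ∀ x, exp (-(a * (x - μ) ^ 2 + b * (x - ν) ^ 2) / 2)
      = exp (-((a + b) / 2) * (x - (a * μ + b * ν) / (a + b)) ^ 2)
        * exp (-(a * b / (a + b)) * (μ - ν) ^ 2 / 2) := fun x => by
    rw [mul_sq_add_mul_sq_eq hab.ne', ← exp_add]
    ring_nf
  simp_rw [hsplit]
  rw [integral_mul_const, integral_sub_right_eq_self (fun x => exp (-((a + b) / 2) * x ^ 2)),
    integral_gaussian]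
  congr 2
  field_simp

theorem tilted_gaussian_integrand_eq (σ2 κ θ θs x : ℝ) :
    (((√(2 * π))⁻¹ * exp (-(x - θ) ^ 2 / 2)) /
        ((√(2 * π))⁻¹ * exp (-(x - θs) ^ 2 / 2))) ^ κ *
      ((√(2 * π * σ2))⁻¹ * exp (-(x - θ) ^ 2 / (2 * σ2))) *
      ((√(2 * π))⁻¹ * exp (-(x - θs) ^ 2 / 2))
    = (√(2 * π * σ2))⁻¹ * (√(2 * π))⁻¹ *
      exp (-((κ + σ2⁻¹) * (x - θ) ^ 2 + (1 - κ) * (x - θs) ^ 2) / 2) := by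
  have hc : (√(2 * π))⁻¹ ≠ 0 := by positivity
  rw [mul_div_mul_left _ _ hc, ← exp_sub, ← exp_mul]
  calc _ = (√(2 * π * σ2))⁻¹ * (√(2 * π))⁻¹ * exp ((-(x - θ) ^ 2 / 2 - -(x - θs) ^ 2 / 2) * κ
          + -(x - θ) ^ 2 / (2 * σ2) + -(x - θs) ^ 2 / 2) := by
        rw [exp_add, exp_add]; ring
    _ = _ := by ring_nf

theorem integral_tilted_gaussian {σ2 : ℝ} (hσ : 0 < σ2) (κ θ θs : ℝ) :
    ∫ x : ℝ,
      (((√(2 * π))⁻¹ * exp (-(x - θ) ^ 2 / 2)) /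
          ((√(2 * π))⁻¹ * exp (-(x - θs) ^ 2 / 2))) ^ κ *
        ((√(2 * π * σ2))⁻¹ * exp (-(x - θ) ^ 2 / (2 * σ2))) *
        ((√(2 * π))⁻¹ * exp (-(x - θs) ^ 2 / 2))
    = (√(2 * π * (σ2 + 1)))⁻¹ *
      exp (-((1 - κ) * (1 + κ * σ2) / (σ2 + 1)) * (θ - θs) ^ 2 / 2) := by
  have hab : 0 < (κ + σ2⁻¹) + (1 - κ) := by ring_nf; positivity
  simp_rw [tilted_gaussian_integrand_eq]
  have hsum : (κ + σ2⁻¹) + (1 - κ) = (σ2 + 1) / σ2 := by field_simp; ring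
  have hprec : (κ + σ2⁻¹) * (1 - κ) / ((κ + σ2⁻¹) + (1 - κ))
      = (1 - κ) * (1 + κ * σ2) / (σ2 + 1) := by rw [hsum]; field_simp; ring
  have hconst : (√(2 * π * σ2))⁻¹ * (√(2 * π))⁻¹ * √(2 * π / ((σ2 + 1) / σ2))
      = (√(2 * π * (σ2 + 1)))⁻¹ := by
    rw [← sqrt_inv, ← sqrt_inv, ← sqrt_inv, ← sqrt_mul (by positivity), ← sqrt_mul (by positivity)]
    congr 1
    field_simp
  rw [integral_const_mul, integral_exp_neg_mul_sq_add_mul_sq hab, hprec, ← hconst, hsum]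
  ring

theorem mul_one_add_div_rpow_inv_le {σ2 β : ℝ} (hσ : 0 < σ2) (hβ : 1 ≤ β) :
    σ2 * (1 + β / σ2) ^ (1 / β) ≤ σ2 + 1 := by
  have hβ0 : 0 < β := by linarith
  have hbernoulli : (1 + β / σ2) ^ (1 / β) ≤ 1 + 1 / β * (β / σ2) :=
    rpow_one_add_le_one_add_mul_self (by linarith [div_pos hβ0 hσ]) (by positivity)
      ((div_le_one hβ0).mpr hβ)
  calc σ2 * (1 + β / σ2) ^ (1 / β) ≤ σ2 * (1 + 1 / β * (β / σ2)) := by gcongr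
    _ = σ2 + 1 := by field_simp

theorem inv_add_div_le_tilted_precision {σ2 β : ℝ} (hσ : 0 < σ2) (hβ : 1 < β) (κ : ℝ) :
    1 / (σ2 + β) + κ * ((1 - κ) * β - 1) / (β - 1) ≤ (1 - κ) * (1 + κ * σ2) / (σ2 + 1) := by
  have hβ1 : 0 < β - 1 := by linarith
  have hσβ : 0 < σ2 + β := by linarith
  have hgap : (1 - κ) * (1 + κ * σ2) / (σ2 + 1) - (1 / (σ2 + β) + κ * ((1 - κ) * β - 1) / (β - 1))
      = (1 + κ * σ2 - (1 - κ) * β) ^ 2 / ((σ2 + 1) * (σ2 + β) * (β - 1)) := by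
    field_simp
    ring
  have hgap_nonneg : 0 ≤ (1 + κ * σ2 - (1 - κ) * β) ^ 2 / ((σ2 + 1) * (σ2 + β) * (β - 1)) := by positivity
  linarith

theorem gaussian_density_le_of_variance_le {v w : ℝ} (hv : 0 < v) (hvw : v ≤ w) (A d : ℝ) :
    (√(2 * π * w))⁻¹ * exp (-A * d ^ 2 / 2)
      ≤ exp (-((A - 1 / v) / 2) * d ^ 2) * ((√(2 * π * v))⁻¹ * exp (-d ^ 2 / (2 * v))) := by
  have hsplit : exp (-((A - 1 / v) / 2) * d ^ 2) * ((√(2 * π * v))⁻¹ * exp (-d ^ 2 / (2 * v)))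
      = (√(2 * π * v))⁻¹ * exp (-A * d ^ 2 / 2) := by
    rw [mul_left_comm, ← exp_add]
    congr 2
    field_simp
    ring
  rw [hsplit]
  gcongr

theorem continuous_part_gaussian_bound_general (β σ2 κ : ℝ) (hβ : 1 < β) (hσ : 0 < σ2)
    (hfeas : 1 / (σ2 * (1 + β / σ2) ^ (1/β)) - 1 / (σ2 + β)
              < κ * ((1 - κ) * β - 1) / (β - 1)) :
    ∃ c > 0, ∀ θ θs : ℝ,
      ∫ x : ℝ,
        (((Real.sqrt (2 * Real.pi))⁻¹ * Real.exp (-(x - θ)^2 / 2)) /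
          ((Real.sqrt (2 * Real.pi))⁻¹ * Real.exp (-(x - θs)^2 / 2))) ^ κ *
        ((Real.sqrt (2 * Real.pi * σ2))⁻¹ * Real.exp (-(x - θ)^2 / (2 * σ2))) *
        ((Real.sqrt (2 * Real.pi))⁻¹ * Real.exp (-(x - θs)^2 / 2))
      ≤ Real.exp (-c * (θ - θs)^2) *
        ((Real.sqrt (2 * Real.pi * (σ2 * (1 + β / σ2) ^ (1/β))))⁻¹ *
          Real.exp (-(θ - θs)^2 / (2 * (σ2 * (1 + β / σ2) ^ (1/β))))) := by
  set v := σ2 * (1 + β / σ2) ^ (1 / β)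
  set A := (1 - κ) * (1 + κ * σ2) / (σ2 + 1)
  have hv : 0 < v := by positivity
  have hvA : 1 / v < A := by linarith [inv_add_div_le_tilted_precision hσ hβ κ]
  refine ⟨(A - 1 / v) / 2, by linarith, fun θ θs => ?_⟩
  rw [integral_tilted_gaussian hσ]
  exact gaussian_density_le_of_variance_le hv (mul_one_add_div_rpow_inv_le hσ hβ.le) A _

theorem continuous_part_gaussian_bound (β σ2 κ : ℝ) (hβ : 1 < β) (hσ : 0 < σ2)
    (hκ0 : 0 < κ) (hκ1 : κ < 1) (hfrac : κ * β / (β - 1) < 1)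
    (hfeas : 1 / (σ2 * (1 + β / σ2) ^ (1/β)) - 1 / (σ2 + β)
              < κ * ((1 - κ) * β - 1) / (β - 1)) :
    ∃ c > 0, ∀ θ θs : ℝ,
      ∫ x : ℝ,
        (((Real.sqrt (2 * Real.pi))⁻¹ * Real.exp (-(x - θ)^2 / 2)) /
          ((Real.sqrt (2 * Real.pi))⁻¹ * Real.exp (-(x - θs)^2 / 2))) ^ κ *
        ((Real.sqrt (2 * Real.pi * σ2))⁻¹ * Real.exp (-(x - θ)^2 / (2 * σ2))) *
        ((Real.sqrt (2 * Real.pi))⁻¹ * Real.exp (-(x - θs)^2 / 2))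
      ≤ Real.exp (-c * (θ - θs)^2) *
        ((Real.sqrt (2 * Real.pi * (σ2 * (1 + β / σ2) ^ (1/β))))⁻¹ *
          Real.exp (-(θ - θs)^2 / (2 * (σ2 * (1 + β / σ2) ^ (1/β))))) :=
  continuous_part_gaussian_bound_general β σ2 κ hβ hσ hfeas
end
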